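/- Under the hypotheses of the proximal block coordinate descent step (U_{1,t+1}, U_{2,t+1}, U_{3,t+1}, G_{t+1} successively minimize their respective proximal least-squares subproblems against the fixed tensor Y_{t+1}), and with Ψ(Y, L) = ‖L − Y‖²_F + λψ(Y) for λ > 0 and fixed X, γ > 0, one has Ψ(Y_{t+1}, L_{t+1}) + α₁ Σ_{i=1}^{3} ‖U_{i,t+1} − U_{it}‖²_F + α₂‖G_{t+1} − G_t‖²_F ≤ Ψ(Y_{t+1}, L_t), where L_t = (U_{1t}, U_{2t}, U_{3t})·G_t and L_{t+1} = (U_{1,t+1}, U_{2,t+1}, U_{3,t+1})·G_{t+1}. -/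

import Mathlib

/-- The Welsch loss ψ(Y) = 2γ Σ_p (1 − exp(−(Y_p − X_p)²/(2γ))). -/
noncomputable def welsch {n1 n2 n3 : ℕ} (γ : ℝ) (X Y : Fin n1 × Fin n2 × Fin n3 → ℝ) : ℝ :=
  2 * γ * ∑ p : Fin n1 × Fin n2 × Fin n3, (1 - Real.exp (-(Y p - X p) ^ 2 / (2 * γ)))

/-- The exponential weight ω(Z)_p = exp(−(Z_p − X_p)²/(2γ)). -/
noncomputable def weight {n1 n2 n3 : ℕ} (γ : ℝ) (X Z : Fin n1 × Fin n2 × Fin n3 → ℝ) :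
    Fin n1 × Fin n2 × Fin n3 → ℝ :=
  fun p => Real.exp (-(Z p - X p) ^ 2 / (2 * γ))

/-- The quadratic surrogate ψ̂(Y; Z). -/
noncomputable def welschSurrogate {n1 n2 n3 : ℕ} (γ : ℝ)
    (X Y Z : Fin n1 × Fin n2 × Fin n3 → ℝ) : ℝ :=
  welsch γ X Z + ∑ p : Fin n1 × Fin n2 × Fin n3, weight γ X Z p * (Y p - X p) ^ 2
    - ∑ p : Fin n1 × Fin n2 × Fin n3, weight γ X Z p * (Z p - X p) ^ 2

/-- The objective Ψ(Y, L) = ‖L − Y‖²_F + λψ(Y). -/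
noncomputable def PsiObj {n1 n2 n3 : ℕ} (γ lam : ℝ)
    (X Y L : Fin n1 × Fin n2 × Fin n3 → ℝ) : ℝ :=
  (∑ p : Fin n1 × Fin n2 × Fin n3, (L p - Y p) ^ 2) + lam * welsch γ X Y

/-- The Tucker multilinear action `(A₁, A₂, A₃)·G` of three matrices on a core tensor,
defined entrywise by `[(A₁, A₂, A₃)·G]_{ijk} = Σ_{a,b,c} (A₁)_{ia}(A₂)_{jb}(A₃)_{kc} G_{abc}`. -/
noncomputable def tucker {m1 m2 m3 r1 r2 r3 : ℕ}
    (A1 : Matrix (Fin m1) (Fin r1) ℝ) (A2 : Matrix (Fin m2) (Fin r2) ℝ)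
    (A3 : Matrix (Fin m3) (Fin r3) ℝ) (G : Fin r1 × Fin r2 × Fin r3 → ℝ) :
    Fin m1 × Fin m2 × Fin m3 → ℝ :=
  fun p => ∑ a, ∑ b, ∑ c, A1 p.1 a * A2 p.2.1 b * A3 p.2.2 c * G (a, b, c)

/-- Squared Frobenius norm of a matrix: the sum of squares of all entries. -/
noncomputable def frobSqM {n m : ℕ} (A : Matrix (Fin n) (Fin m) ℝ) : ℝ :=
  ∑ i, ∑ j, A i j ^ 2

/-- Squared Frobenius norm of a tensor: the sum of squares of all entries. -/
noncomputable def frobSqT {n1 n2 n3 : ℕ} (Z : Fin n1 × Fin n2 × Fin n3 → ℝ) : ℝ :=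
  ∑ p : Fin n1 × Fin n2 × Fin n3, Z p ^ 2

/-! Testing each proximal subproblem at the previous iterate, where its proximal term vanishes,
shows that every block update lowers the fitting error `‖L − Y_{t+1}‖²_F` by at least its
proximal term; these four decreases telescope, and the Welsch term `λψ(Y_{t+1})` is common to
both sides. -/

theorem frobSqM_zero {n m : ℕ} : frobSqM (0 : Matrix (Fin n) (Fin m) ℝ) = 0 := by
  simp [frobSqM]

theorem frobSqT_zero {n1 n2 n3 : ℕ} : frobSqT (0 : Fin n1 × Fin n2 × Fin n3 → ℝ) = 0 := by
  simp [frobSqT]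

theorem PsiObj_eq_frobSqT_add {n1 n2 n3 : ℕ} (γ lam : ℝ)
    (X Y L : Fin n1 × Fin n2 × Fin n3 → ℝ) :
    PsiObj γ lam X Y L = frobSqT (L - Y) + lam * welsch γ X Y := by
  simp [PsiObj, frobSqT]

theorem pbcd_sweep_descent_Psi_general {n1 n2 n3 r1 r2 r3 : ℕ}
    (γ lam α1 α2 : ℝ)
    (X Yt1 : Fin n1 × Fin n2 × Fin n3 → ℝ)
    (U1t U1n : Matrix (Fin n1) (Fin r1) ℝ) (U2t U2n : Matrix (Fin n2) (Fin r2) ℝ)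
    (U3t U3n : Matrix (Fin n3) (Fin r3) ℝ) (Gt Gn : Fin r1 × Fin r2 × Fin r3 → ℝ)
    (hU1 : ∀ U1 : Matrix (Fin n1) (Fin r1) ℝ,
      frobSqT (tucker U1n U2t U3t Gt - Yt1) + α1 * frobSqM (U1n - U1t)
        ≤ frobSqT (tucker U1 U2t U3t Gt - Yt1) + α1 * frobSqM (U1 - U1t))
    (hU2 : ∀ U2 : Matrix (Fin n2) (Fin r2) ℝ,
      frobSqT (tucker U1n U2n U3t Gt - Yt1) + α1 * frobSqM (U2n - U2t)
        ≤ frobSqT (tucker U1n U2 U3t Gt - Yt1) + α1 * frobSqM (U2 - U2t))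
    (hU3 : ∀ U3 : Matrix (Fin n3) (Fin r3) ℝ,
      frobSqT (tucker U1n U2n U3n Gt - Yt1) + α1 * frobSqM (U3n - U3t)
        ≤ frobSqT (tucker U1n U2n U3 Gt - Yt1) + α1 * frobSqM (U3 - U3t))
    (hG : ∀ G : Fin r1 × Fin r2 × Fin r3 → ℝ,
      frobSqT (tucker U1n U2n U3n Gn - Yt1) + α2 * frobSqT (Gn - Gt)
        ≤ frobSqT (tucker U1n U2n U3n G - Yt1) + α2 * frobSqT (G - Gt)) :
    PsiObj γ lam X Yt1 (tucker U1n U2n U3n Gn)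
      + α1 * (frobSqM (U1n - U1t) + frobSqM (U2n - U2t) + frobSqM (U3n - U3t))
      + α2 * frobSqT (Gn - Gt)
    ≤ PsiObj γ lam X Yt1 (tucker U1t U2t U3t Gt) := by
  have step1 := hU1 U1t
  have step2 := hU2 U2t
  have step3 := hU3 U3t
  have stepG := hG Gt
  simp only [sub_self, frobSqM_zero, frobSqT_zero, mul_zero, add_zero]
    at step1 step2 step3 stepG
  rw [PsiObj_eq_frobSqT_add, PsiObj_eq_frobSqT_add]
  linarith

/-- The proximal block coordinate descent sweep on the Tucker factors and core decreases the
full objective `Ψ(Y_{t+1}, ·)` by at least the accumulated proximal terms. -/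
theorem pbcd_sweep_descent_Psi {n1 n2 n3 r1 r2 r3 : ℕ}
    (γ lam α1 α2 : ℝ) (hγ : 0 < γ) (hlam : 0 < lam) (hα1 : 0 < α1) (hα2 : 0 < α2)
    (X Yt1 : Fin n1 × Fin n2 × Fin n3 → ℝ)
    (U1t U1n : Matrix (Fin n1) (Fin r1) ℝ) (U2t U2n : Matrix (Fin n2) (Fin r2) ℝ)
    (U3t U3n : Matrix (Fin n3) (Fin r3) ℝ) (Gt Gn : Fin r1 × Fin r2 × Fin r3 → ℝ)
    (hU1 : ∀ U1 : Matrix (Fin n1) (Fin r1) ℝ,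
      frobSqT (tucker U1n U2t U3t Gt - Yt1) + α1 * frobSqM (U1n - U1t)
        ≤ frobSqT (tucker U1 U2t U3t Gt - Yt1) + α1 * frobSqM (U1 - U1t))
    (hU2 : ∀ U2 : Matrix (Fin n2) (Fin r2) ℝ,
      frobSqT (tucker U1n U2n U3t Gt - Yt1) + α1 * frobSqM (U2n - U2t)
        ≤ frobSqT (tucker U1n U2 U3t Gt - Yt1) + α1 * frobSqM (U2 - U2t))
    (hU3 : ∀ U3 : Matrix (Fin n3) (Fin r3) ℝ,
      frobSqT (tucker U1n U2n U3n Gt - Yt1) + α1 * frobSqM (U3n - U3t)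
        ≤ frobSqT (tucker U1n U2n U3 Gt - Yt1) + α1 * frobSqM (U3 - U3t))
    (hG : ∀ G : Fin r1 × Fin r2 × Fin r3 → ℝ,
      frobSqT (tucker U1n U2n U3n Gn - Yt1) + α2 * frobSqT (Gn - Gt)
        ≤ frobSqT (tucker U1n U2n U3n G - Yt1) + α2 * frobSqT (G - Gt)) :
    PsiObj γ lam X Yt1 (tucker U1n U2n U3n Gn)
      + α1 * (frobSqM (U1n - U1t) + frobSqM (U2n - U2t) + frobSqM (U3n - U3t))
      + α2 * frobSqT (Gn - Gt)
    ≤ PsiObj γ lam X Yt1 (tucker U1t U2t U3t Gt) :=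
  pbcd_sweep_descent_Psi_general γ lam α1 α2 X Yt1 U1t U1n U2t U2n U3t U3n Gt Gn hU1 hU2 hU3 hG
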